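/- For every θ > φ, liminf_{ε → 0⁺} Λ_ε*(θ) ≥ Λ*(θ) > 0, where Λ*(θ) = sup_{t ∈ ℝ}(θt − λ(E[e^{t f(ξ)}] − 1)) and Λ_ε*(θ) = sup_{t ∈ ℝ}(θt − λ(E[e^{t f_ε(ξ)}] − 1)). -/

import Mathlib

/-!
As `ε → 0⁺`, the envelopes `f_ε(ξ)` decrease to `f(ξ)` almost surely (because `ξ` is a.s. a
continuity point) and are bounded by `sup |f|`, so by dominated convergence every objective
`θt − λ(E e^{t f_ε(ξ)} − 1)` converges to the corresponding objective for `f`. Passing this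
pointwise convergence to the suprema needs a bound uniform in `ε`: `f(ξ) ≥ c > 0` with some
probability `p > 0`, hence also `f_ε(ξ) ≥ c`, and Chernoff's bound `p e^{tc} ≤ E e^{t f_ε(ξ)}`
bounds the objective for `t ≥ 0`, while for `t ≤ 0` it is `≤ 0` as soon as `λ E f_ε(ξ) < θ`.
Finally `Λ*(θ) > 0` because the objective vanishes at `t = 0` with slope `θ − φ > 0`.
-/

open MeasureTheory Real Filter Set

open ProbabilityTheory Topology

lemma iSup_le_liminf_iSup {α ι : Type*} [Nonempty ι] {l : Filter α} [l.NeBot]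
    {g : α → ι → ℝ} {g₀ : ι → ℝ} {B : ℝ} (hg : ∀ i, Tendsto (fun a => g a i) l (𝓝 (g₀ i)))
    (hB : ∀ᶠ a in l, ∀ i, g a i ≤ B) : ⨆ i, g₀ i ≤ liminf (fun a => ⨆ i, g a i) l := by
  refine ciSup_le fun i => ?_
  rw [← (hg i).liminf_eq]
  refine liminf_le_liminf ?_ (hg i).isBoundedUnder_ge ?_
  · filter_upwards [hB] with a ha
    exact le_ciSup ⟨B, forall_mem_range.2 ha⟩ i
  · exact isCoboundedUnder_ge_of_eventually_le l (hB.mono fun a ha => ciSup_le ha)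

lemma tendsto_integral_comp_of_tendsto_ae {Ω α : Type*} [MeasurableSpace Ω] {μ : Measure Ω}
    [IsFiniteMeasure μ] {l : Filter α} [l.IsCountablyGenerated] {X : α → Ω → ℝ} {Y : Ω → ℝ}
    {M : ℝ} {g : ℝ → ℝ} (hg : Continuous g) (hX : ∀ᶠ a in l, AEMeasurable (X a) μ)
    (hXb : ∀ᶠ a in l, ∀ ω, |X a ω| ≤ M) (hlim : ∀ᵐ ω ∂μ, Tendsto (fun a => X a ω) l (𝓝 (Y ω))) :
    Tendsto (fun a => ∫ ω, g (X a ω) ∂μ) l (𝓝 (∫ ω, g (Y ω) ∂μ)) := by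
  obtain ⟨C, hC⟩ := isCompact_Icc.exists_bound_of_continuousOn (hg.continuousOn (s := Icc (-M) M))
  refine tendsto_integral_filter_of_dominated_convergence (fun _ => C) ?_ ?_
    (integrable_const C) (hlim.mono fun ω hω => (hg.tendsto _).comp hω)
  · exact hX.mono fun a ha => (hg.measurable.comp_aemeasurable ha).aestronglyMeasurable
  · exact hXb.mono fun a ha => ae_of_all _ fun ω => hC _ (abs_le.1 (ha ω))

lemma exists_pos_measureReal_le_of_measure_pos {Ω : Type*} [MeasurableSpace Ω]
    {μ : Measure Ω} [IsFiniteMeasure μ] {X : Ω → ℝ} (h : 0 < μ {ω | 0 < X ω}) :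
    ∃ c > 0, 0 < μ.real {ω | c ≤ X ω} := by
  have hunion : {ω | 0 < X ω} = ⋃ n : ℕ, {ω | 1 / ((n : ℝ) + 1) ≤ X ω} :=
    (congrArg (X ⁻¹' ·) (iUnion_Ici_eq_Ioi_of_lt_of_tendsto (fun n : ℕ => Nat.one_div_pos_of_nat)
      tendsto_one_div_add_atTop_nhds_zero_nat).symm).trans preimage_iUnion
  obtain ⟨n, hn⟩ : ∃ n : ℕ, μ {ω | 1 / ((n : ℝ) + 1) ≤ X ω} ≠ 0 := by
    by_contra! hzero
    exact h.ne' (hunion ▸ measure_iUnion_null hzero)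
  exact ⟨_, Nat.one_div_pos_of_nat, ENNReal.toReal_pos hn (measure_ne_top μ _)⟩

noncomputable def upperEnvelope (f : ℝ → ℝ) (ε x : ℝ) : ℝ :=
  sSup (f '' {s : ℝ | 0 ≤ s ∧ |s - x| ≤ ε})

section UpperEnvelope

variable {f : ℝ → ℝ} {ε x a : ℝ}

lemma upperEnvelope_image_nonempty (hε : 0 ≤ ε) (hx : 0 ≤ x) :
    (f '' {s : ℝ | 0 ≤ s ∧ |s - x| ≤ ε}).Nonempty :=
  ⟨f x, x, ⟨hx, by simpa using hε⟩, rfl⟩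

lemma le_upperEnvelope (hf : BddAbove (range f)) (hε : 0 ≤ ε) (hx : 0 ≤ x) :
    f x ≤ upperEnvelope f ε x :=
  le_csSup (hf.mono (image_subset_range _ _)) ⟨x, ⟨hx, by simpa using hε⟩, rfl⟩

lemma upperEnvelope_le (hε : 0 ≤ ε) (hx : 0 ≤ x)
    (h : ∀ s, 0 ≤ s → |s - x| ≤ ε → f s ≤ a) : upperEnvelope f ε x ≤ a :=
  csSup_le (upperEnvelope_image_nonempty hε hx) <| by
    rintro _ ⟨s, ⟨hs, hsx⟩, rfl⟩
    exact h s hs hsx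

lemma abs_upperEnvelope_le {M : ℝ} (hf : ∀ y, |f y| ≤ M) (hε : 0 ≤ ε) (hx : 0 ≤ x) :
    |upperEnvelope f ε x| ≤ M := by
  have hfb : BddAbove (range f) := ⟨M, by rintro _ ⟨y, rfl⟩; exact (abs_le.1 (hf y)).2⟩
  refine abs_le.2 ⟨(abs_le.1 (hf x)).1.trans (le_upperEnvelope hfb hε hx), ?_⟩
  exact upperEnvelope_le hε hx fun s _ _ => (abs_le.1 (hf s)).2

lemma lt_upperEnvelope_iff (hf : BddAbove (range f)) (hε : 0 ≤ ε) (hx : 0 ≤ x) :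
    a < upperEnvelope f ε x ↔ ∃ s, (0 ≤ s ∧ |s - x| ≤ ε) ∧ a < f s := by
  rw [upperEnvelope, lt_csSup_iff (hf.mono (image_subset_range _ _))
    (upperEnvelope_image_nonempty hε hx)]
  simp only [mem_image, exists_exists_and_eq_and, mem_ofPred_eq]

/-- Points at distance exactly `ε` from `T` lie in `T - ε` or `T + ε`, so the closed
`ε`-neighbourhood is a union of an open set and two translates of `T`. -/
lemma measurableSet_exists_abs_sub_le {T : Set ℝ} (hT : MeasurableSet T) (hε : 0 ≤ ε) :
    MeasurableSet {x | ∃ s ∈ T, |s - x| ≤ ε} := by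
  have : {x | ∃ s ∈ T, |s - x| ≤ ε} =
      (⋃ s ∈ T, Metric.ball s ε) ∪ ((· + ε) ⁻¹' T ∪ (· - ε) ⁻¹' T) := by
    ext x
    simp only [mem_ofPred_eq, mem_union, mem_iUnion₂, Metric.mem_ball, dist_comm x, Real.dist_eq,
      mem_preimage, exists_prop]
    constructor
    · rintro ⟨s, hs, hsx⟩
      rcases hsx.lt_or_eq with h | h
      · exact Or.inl ⟨s, hs, h⟩
      · rcases abs_eq (abs_nonneg _ |>.trans_eq h) |>.1 h with h' | h'
        · exact Or.inr (Or.inl (by rwa [show x + ε = s by linarith]))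
        · exact Or.inr (Or.inr (by rwa [show x - ε = s by linarith]))
    · rintro (⟨s, hs, h⟩ | h | h)
      · exact ⟨s, hs, h.le⟩
      · exact ⟨x + ε, h, by simp [abs_of_nonneg hε]⟩
      · exact ⟨x - ε, h, by simp [abs_of_nonneg hε]⟩
  rw [this]
  exact (isOpen_biUnion fun s _ => Metric.isOpen_ball).measurableSet.union
    ((measurable_add_const ε hT).union (measurable_sub_const ε hT))

lemma Measurable.upperEnvelope_comp {Ω : Type*} [MeasurableSpace Ω] (hf : Measurable f)
    (hfb : BddAbove (range f)) (hε : 0 ≤ ε) {ξ : Ω → ℝ} (hξ : Measurable ξ)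
    (hξ₀ : ∀ ω, 0 ≤ ξ ω) : Measurable fun ω => upperEnvelope f ε (ξ ω) := by
  refine measurable_of_Ioi fun a => ?_
  have hT : MeasurableSet {s | 0 ≤ s ∧ a < f s} :=
    measurableSet_Ici.inter (hf measurableSet_Ioi)
  convert hξ (measurableSet_exists_abs_sub_le hT hε) using 1
  ext ω
  simp only [mem_preimage, mem_Ioi, lt_upperEnvelope_iff hfb hε (hξ₀ ω), mem_ofPred_eq]
  constructor
  · rintro ⟨s, ⟨hs, hsx⟩, has⟩
    exact ⟨s, ⟨hs, has⟩, hsx⟩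
  · rintro ⟨s, ⟨hs, has⟩, hsx⟩
    exact ⟨s, ⟨hs, hsx⟩, has⟩

lemma tendsto_upperEnvelope (hf : BddAbove (range f)) (hx : 0 ≤ x)
    (hc : ContinuousWithinAt f (Ici 0) x) :
    Tendsto (fun ε => upperEnvelope f ε x) (𝓝[>] 0) (𝓝 (f x)) := by
  refine tendsto_order.2 ⟨fun a ha => ?_, fun b hb => ?_⟩
  · filter_upwards [self_mem_nhdsWithin] with ε hε
    exact ha.trans_le (le_upperEnvelope hf (le_of_lt hε) hx)
  · obtain ⟨b', hxb', hb'⟩ := exists_between hb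
    obtain ⟨δ, hδ, hfδ⟩ := Metric.eventually_nhds_iff.1
      (eventually_nhdsWithin_iff.1 (hc.eventually (Iio_mem_nhds hxb')))
    filter_upwards [Ioo_mem_nhdsGT hδ] with ε ⟨hε, hεδ⟩
    refine lt_of_le_of_lt (upperEnvelope_le hε.le hx fun s hs hsx => ?_) hb'
    exact (hfδ (by rw [Real.dist_eq]; linarith) hs).le

end UpperEnvelope

/-- `Λ*(θ)` is the supremum over `t` of this objective for `X = f(ξ)`, and `Λ_ε*(θ)` the one for
`X = f_ε(ξ)`. -/
noncomputable def poissonCramerObjective {Ω : Type*} [MeasurableSpace Ω] (μ : Measure Ω)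
    (lam θ : ℝ) (X : Ω → ℝ) (t : ℝ) : ℝ :=
  θ * t - lam * (mgf X μ t - 1)

section PoissonCramerObjective

variable {Ω : Type*} [MeasurableSpace Ω] {μ : Measure Ω} {X : Ω → ℝ} {lam θ M t : ℝ}

lemma one_add_mul_integral_le_mgf [IsProbabilityMeasure μ] (hX : Integrable X μ)
    (hexp : Integrable (fun ω => exp (t * X ω)) μ) : 1 + t * μ[X] ≤ mgf X μ t := by
  calc 1 + t * μ[X] = ∫ ω, (1 + t * X ω) ∂μ := by
        rw [integral_add (integrable_const 1) (hX.const_mul t), integral_const_mul]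
        simp
    _ ≤ mgf X μ t := integral_mono ((integrable_const 1).add (hX.const_mul t)) hexp
        fun ω => by linarith [add_one_le_exp (t * X ω)]

lemma poissonCramerObjective_nonpos_of_nonpos [IsProbabilityMeasure μ] (hX : Integrable X μ)
    (hexp : Integrable (fun ω => exp (t * X ω)) μ) (hlam : 0 ≤ lam) (hθ : lam * μ[X] ≤ θ)
    (ht : t ≤ 0) : poissonCramerObjective μ lam θ X t ≤ 0 := by
  have := mul_le_mul_of_nonneg_left (one_add_mul_integral_le_mgf hX hexp) hlam
  unfold poissonCramerObjective
  nlinarith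

/-- Chernoff's bound `p e^{tc} ≤ E e^{tX}` and `e^u ≥ u²/2` bound the objective by a concave
quadratic in `t`. -/
lemma poissonCramerObjective_le_of_nonneg [IsFiniteMeasure μ]
    (hexp : Integrable (fun ω => exp (t * X ω)) μ) (hlam : 0 < lam) {c p : ℝ} (hc : 0 < c)
    (hp : 0 < p) (hpX : p ≤ μ.real {ω | c ≤ X ω}) (ht : 0 ≤ t) :
    poissonCramerObjective μ lam θ X t ≤ θ ^ 2 / (2 * lam * p * c ^ 2) + lam := by
  have hchernoff : p * exp (t * c) ≤ mgf X μ t := by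
    have := hpX.trans (measure_ge_le_exp_mul_mgf c ht hexp)
    rwa [neg_mul, exp_neg, ← div_eq_inv_mul, le_div_iff₀ (exp_pos _)] at this
  have hquad : (t * c) ^ 2 / 2 ≤ exp (t * c) := by
    nlinarith [quadratic_le_exp_of_nonneg (mul_nonneg ht hc.le)]
  have ha : 0 < lam * p * c ^ 2 / 2 := by positivity
  have hsq : θ * t - lam * p * c ^ 2 / 2 * t ^ 2 ≤ θ ^ 2 / (2 * lam * p * c ^ 2) := by
    rw [le_div_iff₀ (by positivity)]
    nlinarith [sq_nonneg (lam * p * c ^ 2 * t - θ)]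
  have := mul_le_mul_of_nonneg_left (hchernoff.trans' (mul_le_mul_of_nonneg_left hquad hp.le))
    hlam.le
  unfold poissonCramerObjective
  nlinarith

lemma poissonCramerObjective_le [IsProbabilityMeasure μ] (hX : AEMeasurable X μ)
    (hXb : ∀ ω, |X ω| ≤ M) (hlam : 0 < lam) (hθ : lam * μ[X] ≤ θ) {c p : ℝ} (hc : 0 < c)
    (hp : 0 < p) (hpX : p ≤ μ.real {ω | c ≤ X ω}) (t : ℝ) :
    poissonCramerObjective μ lam θ X t ≤ θ ^ 2 / (2 * lam * p * c ^ 2) + lam := by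
  have hexp : Integrable (fun ω => exp (t * X ω)) μ :=
    integrable_exp_mul_of_mem_Icc hX (ae_of_all _ fun ω => abs_le.1 (hXb ω))
  rcases le_total t 0 with ht | ht
  · have hXi : Integrable X μ := .of_bound hX.aestronglyMeasurable M (ae_of_all _ hXb)
    exact (poissonCramerObjective_nonpos_of_nonpos hXi hexp hlam.le hθ ht).trans (by positivity)
  · exact poissonCramerObjective_le_of_nonneg hexp hlam hc hp hpX ht

lemma exists_poissonCramerObjective_pos [IsProbabilityMeasure μ] (hX : AEMeasurable X μ)
    (hXb : ∀ ω, |X ω| ≤ M) (hθ : lam * μ[X] < θ) :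
    ∃ t, 0 < poissonCramerObjective μ lam θ X t := by
  have hexpSet : integrableExpSet X μ = univ :=
    eq_univ_of_forall fun t =>
      integrable_exp_mul_of_mem_Icc hX (ae_of_all _ fun ω => abs_le.1 (hXb ω))
  have h0 : (0 : ℝ) ∈ interior (integrableExpSet X μ) := by simp [hexpSet]
  have hderiv : HasDerivAt (poissonCramerObjective μ lam θ X) (θ - lam * μ[X]) 0 := by
    have hmgf : HasDerivAt (mgf X μ) μ[X] 0 := by simpa using hasDerivAt_mgf h0
    have := ((hasDerivAt_id' 0).const_mul θ).sub ((hmgf.sub_const 1).const_mul lam)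
    rwa [mul_one] at this
  by_contra! hle
  have hmax : IsLocalMax (poissonCramerObjective μ lam θ X) 0 :=
    Eventually.of_forall fun t => (hle t).trans_eq (by simp [poissonCramerObjective])
  linarith [hmax.hasDerivAt_eq_zero hderiv]

section Convergence

variable {α : Type*} {l : Filter α} [l.IsCountablyGenerated] {X : α → Ω → ℝ} {Y : Ω → ℝ}

lemma tendsto_poissonCramerObjective [IsFiniteMeasure μ] (hX : ∀ᶠ a in l, AEMeasurable (X a) μ)
    (hXb : ∀ᶠ a in l, ∀ ω, |X a ω| ≤ M) (hlim : ∀ᵐ ω ∂μ, Tendsto (fun a => X a ω) l (𝓝 (Y ω)))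
    (t : ℝ) :
    Tendsto (fun a => poissonCramerObjective μ lam θ (X a) t) l
      (𝓝 (poissonCramerObjective μ lam θ Y t)) :=
  tendsto_const_nhds.sub (((tendsto_integral_comp_of_tendsto_ae
    (continuous_const.mul continuous_id).rexp hX hXb hlim).sub_const 1).const_mul lam)

lemma eventually_poissonCramerObjective_le [IsProbabilityMeasure μ]
    (hX : ∀ᶠ a in l, AEMeasurable (X a) μ) (hXb : ∀ᶠ a in l, ∀ ω, |X a ω| ≤ M)
    (hlim : ∀ᵐ ω ∂μ, Tendsto (fun a => X a ω) l (𝓝 (Y ω))) (hge : ∀ᶠ a in l, ∀ ω, Y ω ≤ X a ω)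
    (hlam : 0 < lam) (hθ : lam * μ[Y] < θ) {c : ℝ} (hc : 0 < c)
    (hp : 0 < μ.real {ω | c ≤ Y ω}) :
    ∀ᶠ a in l, ∀ t, poissonCramerObjective μ lam θ (X a) t
      ≤ θ ^ 2 / (2 * lam * μ.real {ω | c ≤ Y ω} * c ^ 2) + lam := by
  have hmean : ∀ᶠ a in l, lam * μ[X a] < θ :=
    ((tendsto_integral_comp_of_tendsto_ae continuous_id hX hXb hlim).const_mul lam)
      |>.eventually_lt_const hθ
  filter_upwards [hX, hXb, hge, hmean] with a hXa hXba hgea hmeana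
  exact poissonCramerObjective_le hXa hXba hlam hmeana.le hc hp
    (measureReal_mono fun ω hω => le_trans hω (hgea ω))

end Convergence

end PoissonCramerObjective

/-- With f, f_ε, ξ as in Statement 10, P{f(ξ) > 0} > 0, λ > 0 and
φ = λE[f(ξ)]: for every θ > φ, liminf_{ε→0⁺} Λ_ε*(θ) ≥ Λ*(θ) > 0, where
Λ*(θ) = sup_t (θt − λ(E[e^{t f(ξ)}] − 1)) and Λ_ε*(θ) = sup_t (θt − λ(E[e^{t f_ε(ξ)}] − 1)). -/
theorem stmt11
    {Ω : Type*} [MeasurableSpace Ω] (μ : Measure Ω) [IsProbabilityMeasure μ]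
    (f : ℝ → ℝ) (hfmeas : Measurable f) (M : ℝ) (hfbdd : ∀ x, |f x| ≤ M)
    (fε : ℝ → ℝ → ℝ)
    (hfε : ∀ ε x, fε ε x = sSup (f '' {s : ℝ | 0 ≤ s ∧ |s - x| ≤ ε}))
    (ξ : Ω → ℝ) (hξmeas : Measurable ξ) (hξpos : ∀ ω, 0 ≤ ξ ω)
    (hcont : ∀ᵐ ω ∂μ, ContinuousWithinAt f (Ici 0) (ξ ω))
    (hpos : 0 < μ {ω | 0 < f (ξ ω)})
    (lam : ℝ) (hlam : 0 < lam)
    (φ : ℝ) (hφ : φ = lam * ∫ ω, f (ξ ω) ∂μ)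
    (Λstar : ℝ → ℝ)
    (hΛstar : ∀ θ, Λstar θ
      = ⨆ t : ℝ, (θ * t - lam * ((∫ ω, Real.exp (t * f (ξ ω)) ∂μ) - 1)))
    (Λstarε : ℝ → ℝ → ℝ)
    (hΛstarε : ∀ ε θ, Λstarε ε θ
      = ⨆ t : ℝ, (θ * t - lam * ((∫ ω, Real.exp (t * fε ε (ξ ω)) ∂μ) - 1)))
    (θ : ℝ) (hθ : φ < θ) :
    Λstar θ ≤ liminf (fun ε => Λstarε ε θ) (nhdsWithin 0 (Ioi 0)) ∧ 0 < Λstar θ := by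
  obtain rfl : fε = upperEnvelope f := funext₂ hfε
  subst hφ
  set X : Ω → ℝ := fun ω => f (ξ ω)
  set Xε : ℝ → Ω → ℝ := fun ε ω => upperEnvelope f ε (ξ ω)
  have hfb : BddAbove (range f) := ⟨M, forall_mem_range.2 fun x => (abs_le.1 (hfbdd x)).2⟩
  have hX : AEMeasurable X μ := (hfmeas.comp hξmeas).aemeasurable
  have hε : ∀ᶠ ε in 𝓝[>] (0 : ℝ), 0 ≤ ε := eventually_mem_nhdsWithin.mono fun _ h => le_of_lt h
  have hXε : ∀ᶠ ε in 𝓝[>] 0, AEMeasurable (Xε ε) μ :=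
    hε.mono fun ε hε => (hfmeas.upperEnvelope_comp hfb hε hξmeas hξpos).aemeasurable
  have hXεb : ∀ᶠ ε in 𝓝[>] 0, ∀ ω, |Xε ε ω| ≤ M :=
    hε.mono fun ε hε ω => abs_upperEnvelope_le hfbdd hε (hξpos ω)
  have hXε_ge : ∀ᶠ ε in 𝓝[>] 0, ∀ ω, X ω ≤ Xε ε ω :=
    hε.mono fun ε hε ω => le_upperEnvelope hfb hε (hξpos ω)
  have hlim : ∀ᵐ ω ∂μ, Tendsto (fun ε => Xε ε ω) (𝓝[>] 0) (𝓝 (X ω)) :=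
    hcont.mono fun ω hω => tendsto_upperEnvelope hfb (hξpos ω) hω
  obtain ⟨c, hc, hp⟩ := exists_pos_measureReal_le_of_measure_pos hpos
  have hΛ : Λstar θ = ⨆ t, poissonCramerObjective μ lam θ X t := hΛstar θ
  have hΛε ε : Λstarε ε θ = ⨆ t, poissonCramerObjective μ lam θ (Xε ε) t := hΛstarε ε θ
  simp_rw [hΛ, hΛε]
  refine ⟨iSup_le_liminf_iSup (tendsto_poissonCramerObjective hXε hXεb hlim)
    (eventually_poissonCramerObjective_le hXε hXεb hlim hXε_ge hlam hθ hc hp), ?_⟩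
  obtain ⟨t, ht⟩ := exists_poissonCramerObjective_pos hX (fun ω => hfbdd _) hθ
  exact ht.trans_le (le_ciSup ⟨_, forall_mem_range.2
    (poissonCramerObjective_le hX (fun ω => hfbdd _) hlam hθ.le hc hp le_rfl)⟩ t)
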